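/- Fix a real k > −1 and let a < b be consecutive positive zeros of J_{k+1}. Let c ∈ (a,b) satisfy J_k(c) = 0, and suppose c > 2·√((k+1)(k+2)). Then there exist unique d, e ∈ (a,b) with J_{k+2}(d) = 0 and J_{k+3}(e) = 0, and they satisfy a < d < c < e < b. -/

import Mathlib

/-!
Write `J_ν(r) = (r/2)^ν S_ν((r/2)²)` with the entire function `S_ν` (`besselSeries ν`), and put
`g n r = S_{k+n}((r/2)²)` (`besselChain k n r`). Then `(g n)' = -(r/2) g (n+1)` and
`g n = (k+n+1) g (n+1) - (r/2)² g (n+2)`, so that `(r^{2(k+n+1)} g (n+1))' = 2 r^{2(k+n)+1} g n`.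

Normalise the sign so that `g 1 > 0` on `(a, b)`. Then `g 0` decreases on `[a, b]`, so by the
recurrence `g 2 < 0` at `a` and `g 2 > 0` on `[c, b]`; as `r^{2(k+2)} g 2` increases on `[a, b]`,
`g 2` has exactly one zero `d` there, and `d < c`. The recurrence again gives `g 3 < 0` on `(a, d]`
and, because `c² > 4(k+1)(k+2)`, at `c`, while `g 3 > 0` at `b`; as `r^{2(k+3)} g 3` increases on
`[d, b]`, `g 3` has exactly one zero in `(a, b)`, and it lies in `(c, b)`.
-/

open Real

/-- Bessel function of the first kind of real order `k`, defined by its power series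
(valid for `r > 0`, using real powers). -/
noncomputable def besselJ (k r : ℝ) : ℝ :=
  ∑' m : ℕ, ((-1 : ℝ) ^ m / (m.factorial * Real.Gamma (m + k + 1))) * (r / 2) ^ ((2 * m : ℝ) + k)

open Set Filter
open scoped Nat

noncomputable def besselCoeff (j : ℝ) (m : ℕ) : ℝ := (-1) ^ m / (m ! * Gamma (m + j + 1))

noncomputable def besselSeries (j x : ℝ) : ℝ := ∑' m, besselCoeff j m * x ^ m

lemma succ_mul_besselCoeff_succ (j : ℝ) (m : ℕ) :
    (m + 1 : ℝ) * besselCoeff j (m + 1) = -besselCoeff (j + 1) m := by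
  have hm : (m + 1 : ℝ) ≠ 0 := by positivity
  simp only [besselCoeff, Nat.factorial_succ, Nat.cast_mul, Nat.cast_succ,
    show (m : ℝ) + 1 + j + 1 = m + (j + 1) + 1 by ring]
  field_simp
  ring

lemma besselCoeff_eq_mul_besselCoeff_add_one (j : ℝ) (m : ℕ) :
    besselCoeff j m = (m + j + 1) * besselCoeff (j + 1) m := by
  -- at a pole of `Gamma` both sides vanish, `Gamma` being `0` there
  rcases eq_or_ne ((m : ℝ) + j + 1) 0 with hs | hs
  · simp [besselCoeff, hs]
  · rw [besselCoeff, besselCoeff, show (m : ℝ) + (j + 1) + 1 = m + j + 1 + 1 by ring,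
      Gamma_add_one hs, mul_div_assoc', mul_left_comm, mul_div_mul_left _ _ hs]

lemma summable_abs_besselCoeff_mul_pow (j R : ℝ) :
    Summable fun m => |besselCoeff j m| * |R| ^ m := by
  obtain ⟨N, hN⟩ := exists_nat_ge (2 * |R| - j)
  refine summable_of_ratio_norm_eventually_le (r := 1 / 2) (by norm_num) ?_
  filter_upwards [eventually_ge_atTop N] with m hm
  have hmN : (N : ℝ) ≤ m := by exact_mod_cast hm
  have hratio : |besselCoeff j m| = (m + 1) * |m + j + 1| * |besselCoeff j (m + 1)| := by
    rw [besselCoeff_eq_mul_besselCoeff_add_one, ← neg_neg (besselCoeff (j + 1) m),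
      ← succ_mul_besselCoeff_succ, abs_mul, abs_neg, abs_mul,
      abs_of_pos (by positivity : (0 : ℝ) < m + 1)]
    ring
  have hlarge : 2 * |R| ≤ (m + 1) * |m + j + 1| := by
    have := le_abs_self ((m : ℝ) + j + 1)
    nlinarith [abs_nonneg ((m : ℝ) + j + 1), (m.cast_nonneg : (0 : ℝ) ≤ m)]
  simp only [norm_mul, norm_pow, Real.norm_eq_abs, abs_abs]
  rw [hratio, pow_succ]
  have := mul_le_mul_of_nonneg_right hlarge
    (mul_nonneg (abs_nonneg (besselCoeff j (m + 1))) (pow_nonneg (abs_nonneg R) m))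
  linarith

lemma summable_besselCoeff_mul_pow (j x : ℝ) : Summable fun m => besselCoeff j m * x ^ m :=
  (summable_abs_besselCoeff_mul_pow j x).of_norm_bounded fun m => by
    rw [norm_mul, norm_pow, Real.norm_eq_abs, Real.norm_eq_abs]

lemma hasDerivAt_besselSeries (j x : ℝ) :
    HasDerivAt (besselSeries j) (-besselSeries (j + 1) x) x := by
  have hshift : besselSeries j =
      fun y => besselCoeff j 0 + ∑' m, besselCoeff j (m + 1) * y ^ (m + 1) := by
    ext y
    rw [besselSeries, (summable_besselCoeff_mul_pow j y).tsum_eq_zero_add, pow_zero, mul_one]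
  have hterm (m : ℕ) (y : ℝ) : HasDerivAt (fun y => besselCoeff j (m + 1) * y ^ (m + 1))
      (-(besselCoeff (j + 1) m * y ^ m)) y := by
    refine ((hasDerivAt_pow (m + 1) y).const_mul (besselCoeff j (m + 1))).congr_deriv ?_
    rw [neg_mul_eq_neg_mul, ← succ_mul_besselCoeff_succ, Nat.add_sub_cancel]
    push_cast
    ring
  set R := |x| + 1
  have hbound (m : ℕ) (y : ℝ) (hy : y ∈ Metric.ball 0 R) :
      ‖-(besselCoeff (j + 1) m * y ^ m)‖ ≤ |besselCoeff (j + 1) m| * |R| ^ m := by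
    rw [norm_neg, norm_mul, norm_pow, Real.norm_eq_abs, Real.norm_eq_abs]
    rw [mem_ball_zero_iff, Real.norm_eq_abs] at hy
    exact mul_le_mul_of_nonneg_left (pow_le_pow_left₀ (abs_nonneg y)
      (hy.le.trans (le_abs_self R)) m) (abs_nonneg _)
  have hsum := hasDerivAt_tsum_of_isPreconnected (summable_abs_besselCoeff_mul_pow (j + 1) R)
    Metric.isOpen_ball (convex_ball 0 R).isPreconnected (fun m y _ => hterm m y) hbound
    (Metric.mem_ball_self (by positivity)) (by simp) (y := x) (by simp [R])
  rw [hshift]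
  simpa [besselSeries, tsum_neg] using hsum

lemma besselSeries_eq_sub (j x : ℝ) :
    besselSeries j x = (j + 1) * besselSeries (j + 1) x - x * besselSeries (j + 2) x := by
  set f : ℕ → ℝ := fun m => besselCoeff j m * x ^ m - (j + 1) * (besselCoeff (j + 1) m * x ^ m)
  have hf : Summable f := (summable_besselCoeff_mul_pow j x).sub
    ((summable_besselCoeff_mul_pow (j + 1) x).mul_left _)
  have hf0 : f 0 = 0 := by simp [f, besselCoeff_eq_mul_besselCoeff_add_one j 0]
  have hf_succ (m : ℕ) : f (m + 1) = -x * (besselCoeff (j + 2) m * x ^ m) := by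
    have h := succ_mul_besselCoeff_succ (j + 1) m
    rw [show j + 1 + 1 = j + 2 by ring] at h
    simp only [f, besselCoeff_eq_mul_besselCoeff_add_one j (m + 1)]
    push_cast
    linear_combination x ^ (m + 1) * h
  have hsub : besselSeries j x - (j + 1) * besselSeries (j + 1) x = ∑' m, f m := by
    rw [besselSeries, besselSeries, ← tsum_mul_left,
      ← (summable_besselCoeff_mul_pow j x).tsum_sub
        ((summable_besselCoeff_mul_pow (j + 1) x).mul_left _)]
  rw [hf.tsum_eq_zero_add, hf0, zero_add, tsum_congr hf_succ, tsum_mul_left] at hsub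
  change _ = -x * besselSeries (j + 2) x at hsub
  linear_combination hsub

lemma besselJ_eq_rpow_mul_besselSeries (j : ℝ) {r : ℝ} (hr : 0 < r) :
    besselJ j r = (r / 2) ^ j * besselSeries j ((r / 2) ^ 2) := by
  have hr2 : 0 < r / 2 := by positivity
  rw [besselJ, besselSeries, ← tsum_mul_left]
  refine tsum_congr fun m => ?_
  rw [rpow_add hr2, show (2 * m : ℝ) = ((2 * m : ℕ) : ℝ) by push_cast; ring, rpow_natCast,
    pow_mul, besselCoeff]
  ring

lemma besselJ_eq_zero_iff (j : ℝ) {r : ℝ} (hr : 0 < r) :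
    besselJ j r = 0 ↔ besselSeries j ((r / 2) ^ 2) = 0 := by
  rw [besselJ_eq_rpow_mul_besselSeries j hr, mul_eq_zero,
    or_iff_right (rpow_pos_of_pos (by positivity) j).ne']

lemma pos_iff_lt_of_strictMonoOn_rpow_mul {f : ℝ → ℝ} {p x y d r : ℝ}
    (hf : StrictMonoOn (fun s => s ^ p * f s) (Icc x y)) (hx : 0 < x) (hd : d ∈ Icc x y)
    (hfd : f d = 0) (hr : r ∈ Icc x y) : 0 < f r ↔ d < r := by
  rw [← hf.lt_iff_lt hd hr]
  simp only [hfd, mul_zero, mul_pos_iff_of_pos_left (rpow_pos_of_pos (hx.trans_le hr.1) p)]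

lemma IsPreconnected.forall_pos_or_forall_neg {α : Type*} [TopologicalSpace α] {s : Set α}
    {f : α → ℝ} (hs : IsPreconnected s) (hf : ContinuousOn f s) (h0 : ∀ x ∈ s, f x ≠ 0) :
    (∀ x ∈ s, 0 < f x) ∨ ∀ x ∈ s, f x < 0 := by
  by_contra! h
  obtain ⟨⟨x, hx, hfx⟩, y, hy, hfy⟩ := h
  obtain ⟨z, hz, hfz⟩ := hs.intermediate_value hx hy hf ⟨hfx, hfy⟩
  exact h0 z hz hfz

-- Closed under `g ↦ -g`, which is how the sign of `g 1` gets normalised.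
structure IsBesselChain (k : ℝ) (g : ℕ → ℝ → ℝ) : Prop where
  hasDerivAt (n : ℕ) (r : ℝ) : HasDerivAt (g n) (-(r / 2 * g (n + 1) r)) r
  eq_sub (n : ℕ) (r : ℝ) : g n r = (k + n + 1) * g (n + 1) r - (r / 2) ^ 2 * g (n + 2) r

noncomputable def besselChain (k : ℝ) (n : ℕ) (r : ℝ) : ℝ := besselSeries (k + n) ((r / 2) ^ 2)

lemma isBesselChain_besselChain (k : ℝ) : IsBesselChain k (besselChain k) where
  hasDerivAt n r := by
    have hsq : HasDerivAt (fun r : ℝ => (r / 2) ^ 2) (r / 2) r := by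
      refine (((hasDerivAt_id r).div_const 2).pow 2).congr_deriv ?_
      simp only [id]
      ring
    refine ((hasDerivAt_besselSeries (k + n) _).comp r hsq).congr_deriv ?_
    simp only [besselChain, Nat.cast_succ, add_assoc]
    ring
  eq_sub n r := by
    rw [besselChain, besselSeries_eq_sub]
    simp only [besselChain, Nat.cast_add, Nat.cast_one, Nat.cast_ofNat, add_assoc]

namespace IsBesselChain

variable {k : ℝ} {g : ℕ → ℝ → ℝ}

lemma neg (hg : IsBesselChain k g) : IsBesselChain k (-g) where
  hasDerivAt n r := by simpa using (hg.hasDerivAt n r).neg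
  eq_sub n r := by simp only [Pi.neg_apply, hg.eq_sub n r]; ring

lemma continuous (hg : IsBesselChain k g) (n : ℕ) : Continuous (g n) :=
  continuous_iff_continuousAt.2 fun r => (hg.hasDerivAt n r).continuousAt

lemma strictAntiOn (hg : IsBesselChain k g) {n : ℕ} {x y : ℝ} (hx : 0 ≤ x)
    (hpos : ∀ r ∈ Ioo x y, 0 < g (n + 1) r) : StrictAntiOn (g n) (Icc x y) := by
  refine strictAntiOn_of_deriv_neg (convex_Icc x y) (hg.continuous n).continuousOn fun r hr => ?_
  rw [interior_Icc] at hr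
  rw [(hg.hasDerivAt n r).deriv, neg_lt_zero]
  exact mul_pos (by linarith [hr.1]) (hpos r hr)

lemma hasDerivAt_rpow_mul (hg : IsBesselChain k g) (n : ℕ) {r : ℝ} (hr : 0 < r) :
    HasDerivAt (fun s => s ^ (2 * (k + n + 1)) * g (n + 1) s)
      (2 * r ^ (2 * (k + n + 1) - 1) * g n r) r := by
  refine ((hasDerivAt_rpow_const (Or.inl hr.ne')).mul (hg.hasDerivAt (n + 1) r)).congr_deriv ?_
  rw [hg.eq_sub n r, show r ^ (2 * (k + n + 1)) = r ^ (2 * (k + n + 1) - 1) * r by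
    rw [← rpow_add_one hr.ne']; ring_nf]
  ring

lemma strictMonoOn_rpow_mul (hg : IsBesselChain k g) {n : ℕ} {x y : ℝ} (hx : 0 < x)
    (hpos : ∀ r ∈ Ioo x y, 0 < g n r) :
    StrictMonoOn (fun s => s ^ (2 * (k + n + 1)) * g (n + 1) s) (Icc x y) := by
  refine strictMonoOn_of_deriv_pos (convex_Icc x y)
    (fun r hr => (hg.hasDerivAt_rpow_mul n (hx.trans_le hr.1)).continuousAt.continuousWithinAt)
    fun r hr => ?_
  rw [interior_Icc] at hr
  rw [(hg.hasDerivAt_rpow_mul n (hx.trans hr.1)).deriv]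
  exact mul_pos (mul_pos two_pos (rpow_pos_of_pos (hx.trans hr.1) _)) (hpos r hr)

lemma term_two_pos_of_mem_Icc (hg : IsBesselChain k g) (hk : -1 < k) {a b c : ℝ} (ha : 0 ≤ a)
    (h1 : ∀ r ∈ Ioo a b, 0 < g 1 r) (h1b : g 1 b = 0) (hc : c ∈ Ioo a b) (h0c : g 0 c = 0) :
    ∀ r ∈ Icc c b, 0 < g 2 r := by
  intro r hr
  have hanti := hg.strictAntiOn (n := 0) ha h1
  have hcab : c ∈ Icc a b := Ioo_subset_Icc_self hc
  have hrab : r ∈ Icc a b := ⟨hc.1.le.trans hr.1, hr.2⟩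
  have h1r : 0 ≤ g 1 r := by
    rcases hr.2.eq_or_lt with rfl | hrb
    · exact h1b.ge
    · exact (h1 r ⟨hc.1.trans_le hr.1, hrb⟩).le
  have hrhs : 0 < (k + 1) * g 1 r - g 0 r := by
    rcases hr.1.eq_or_lt with rfl | hcr
    · nlinarith [h1 _ hc]
    · nlinarith [h0c ▸ hanti hcab hrab hcr]
  have e0 : g 0 r = (k + 1) * g 1 r - (r / 2) ^ 2 * g 2 r := by simpa using hg.eq_sub 0 r
  exact pos_of_mul_pos_right (a := (r / 2) ^ 2) (by linarith) (sq_nonneg _)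

lemma term_two_neg_left (hg : IsBesselChain k g) {a b c : ℝ} (ha : 0 < a)
    (h1 : ∀ r ∈ Ioo a b, 0 < g 1 r) (h1a : g 1 a = 0) (hc : c ∈ Ioo a b) (h0c : g 0 c = 0) :
    g 2 a < 0 := by
  have h0a : 0 < g 0 a :=
    h0c ▸ hg.strictAntiOn (n := 0) ha.le h1 (left_mem_Icc.2 (hc.1.trans hc.2).le)
      (Ioo_subset_Icc_self hc) hc.1
  have e0 : g 0 a = (k + 1) * g 1 a - (a / 2) ^ 2 * g 2 a := by simpa using hg.eq_sub 0 a
  rw [h1a] at e0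
  exact neg_of_mul_neg_right (a := (a / 2) ^ 2) (by linarith) (sq_nonneg _)

lemma exists_zero_term_two (hg : IsBesselChain k g) (hk : -1 < k) {a b c : ℝ} (ha : 0 < a)
    (h1 : ∀ r ∈ Ioo a b, 0 < g 1 r) (h1a : g 1 a = 0) (h1b : g 1 b = 0) (hc : c ∈ Ioo a b)
    (h0c : g 0 c = 0) :
    ∃ d ∈ Ioo a c, (∀ r ∈ Ioo a b, g 2 r = 0 ↔ r = d) ∧ ∀ r ∈ Icc a b, 0 < g 2 r ↔ d < r := by
  have hmono := hg.strictMonoOn_rpow_mul (n := 1) ha h1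
  obtain ⟨d, hd, h2d⟩ := intermediate_value_Ioo hc.1.le (hg.continuous 2).continuousOn
    ⟨hg.term_two_neg_left ha h1 h1a hc h0c,
      hg.term_two_pos_of_mem_Icc hk ha.le h1 h1b hc h0c c (left_mem_Icc.2 hc.2.le)⟩
  have hdab : d ∈ Icc a b := ⟨hd.1.le, (hd.2.trans hc.2).le⟩
  refine ⟨d, hd, fun r hr => ⟨fun h2r => ?_, fun h => h ▸ h2d⟩,
    fun r hr => pos_iff_lt_of_strictMonoOn_rpow_mul hmono ha hdab h2d hr⟩
  exact hmono.injOn (Ioo_subset_Icc_self hr) hdab (by simp [h2r, h2d])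

lemma exists_zero_term_three (hg : IsBesselChain k g) (hk : -1 < k) {a b c d : ℝ} (ha : 0 < a)
    (h1 : ∀ r ∈ Ioo a b, 0 < g 1 r) (h1b : g 1 b = 0) (hc : c ∈ Ioo a b) (h0c : g 0 c = 0)
    (hcr : (k + 1) * (k + 2) < (c / 2) ^ 2) (hd : d ∈ Ioo a c)
    (h2 : ∀ r ∈ Icc a b, 0 < g 2 r ↔ d < r) :
    ∃ e ∈ Ioo c b, ∀ r ∈ Ioo a b, g 3 r = 0 ↔ r = e := by
  have e1 (r : ℝ) : g 1 r = (k + 2) * g 2 r - (r / 2) ^ 2 * g 3 r := by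
    simpa [add_assoc, one_add_one_eq_two] using hg.eq_sub 1 r
  have h3c : g 3 c < 0 := by
    have e0 : g 0 c = (k + 1) * g 1 c - (c / 2) ^ 2 * g 2 c := by simpa using hg.eq_sub 0 c
    have key :
        (c / 2) ^ 2 * ((c / 2) ^ 2 * g 3 c) = ((k + 1) * (k + 2) - (c / 2) ^ 2) * g 1 c := by
      linear_combination (c / 2) ^ 2 * e1 c + (k + 2) * e0 - (k + 2) * h0c
    have hc2 : 0 < (c / 2) ^ 2 := by nlinarith [ha.trans hc.1]
    refine neg_of_mul_neg_right (neg_of_mul_neg_right (a := (c / 2) ^ 2) ?_ hc2.le) hc2.le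
    rw [key]
    exact mul_neg_of_neg_of_pos (by linarith) (h1 c hc)
  have h3b : 0 < g 3 b := by
    have h2b := hg.term_two_pos_of_mem_Icc hk ha.le h1 h1b hc h0c b (right_mem_Icc.2 hc.2.le)
    have := e1 b
    rw [h1b] at this
    exact pos_of_mul_pos_right (a := (b / 2) ^ 2) (by nlinarith) (sq_nonneg _)
  obtain ⟨e, he, h3e⟩ := intermediate_value_Ioo hc.2.le (hg.continuous 3).continuousOn ⟨h3c, h3b⟩
  have h3neg : ∀ r ∈ Ioc a d, g 3 r < 0 := by
    intro r hr
    have hrab : r ∈ Ioo a b := ⟨hr.1, hr.2.trans_lt (hd.2.trans hc.2)⟩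
    have h2r : g 2 r ≤ 0 := not_lt.1 fun h => (h2 r (Ioo_subset_Icc_self hrab)).1 h |>.not_ge hr.2
    have := e1 r
    exact neg_of_mul_neg_right (a := (r / 2) ^ 2) (by nlinarith [h1 r hrab]) (sq_nonneg _)
  have hmono := hg.strictMonoOn_rpow_mul (n := 2) (ha.trans hd.1) fun r hr =>
    (h2 r ⟨(hd.1.trans hr.1).le, hr.2.le⟩).2 hr.1
  refine ⟨e, he, fun r hr => ⟨fun h3r => ?_, fun h => h ▸ h3e⟩⟩
  have hdr : d < r := lt_of_not_ge fun h => (h3neg r ⟨hr.1, h⟩).ne h3r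
  exact hmono.injOn ⟨hdr.le, hr.2.le⟩ ⟨(hd.2.trans he.1).le, he.2.le⟩ (by simp [h3r, h3e])

lemma exists_interlacing (hg : IsBesselChain k g) (hk : -1 < k) {a b c : ℝ} (ha : 0 < a)
    (h1 : ∀ r ∈ Ioo a b, g 1 r ≠ 0) (h1a : g 1 a = 0) (h1b : g 1 b = 0) (hc : c ∈ Ioo a b)
    (h0c : g 0 c = 0) (hcr : (k + 1) * (k + 2) < (c / 2) ^ 2) :
    ∃ d e, a < d ∧ d < c ∧ c < e ∧ e < b ∧
      (∀ r ∈ Ioo a b, g 2 r = 0 ↔ r = d) ∧ ∀ r ∈ Ioo a b, g 3 r = 0 ↔ r = e := by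
  wlog hpos : ∀ r ∈ Ioo a b, 0 < g 1 r generalizing g
  · have hneg := (isPreconnected_Ioo.forall_pos_or_forall_neg
      (hg.continuous 1).continuousOn h1).resolve_left hpos
    simpa using this hg.neg (by simpa using h1) (by simpa using h1a) (by simpa using h1b)
      (by simpa using h0c) (by simpa using hneg)
  obtain ⟨d, hd, h2d, h2⟩ := hg.exists_zero_term_two hk ha hpos h1a h1b hc h0c
  obtain ⟨e, he, h3e⟩ := hg.exists_zero_term_three hk ha hpos h1b hc h0c hcr hd h2
  exact ⟨d, e, hd.1, hd.2, he.1, he.2, h2d, h3e⟩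

end IsBesselChain

theorem besselJ_interlacing_large_general (k : ℝ) (hk : -1 < k) (a b : ℝ)
    (ha : 0 < a)
    (hza : besselJ (k + 1) a = 0) (hzb : besselJ (k + 1) b = 0)
    (hne : ∀ r ∈ Set.Ioo a b, besselJ (k + 1) r ≠ 0)
    (c : ℝ) (hc : c ∈ Set.Ioo a b) (hzc : besselJ k c = 0)
    (hcr : 2 * Real.sqrt ((k + 1) * (k + 2)) < c) :
    (∃! d, d ∈ Set.Ioo a b ∧ besselJ (k + 2) d = 0) ∧
    (∃! e, e ∈ Set.Ioo a b ∧ besselJ (k + 3) e = 0) ∧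
    ∀ d e, d ∈ Set.Ioo a b → besselJ (k + 2) d = 0 →
      e ∈ Set.Ioo a b → besselJ (k + 3) e = 0 →
        a < d ∧ d < c ∧ c < e ∧ e < b := by
  have hz (n : ℕ) {r : ℝ} (hr : 0 < r) : besselJ (k + n) r = 0 ↔ besselChain k n r = 0 :=
    besselJ_eq_zero_iff _ hr
  have hcr' : (k + 1) * (k + 2) < (c / 2) ^ 2 :=
    (sqrt_lt' (by linarith [ha.trans hc.1])).1 (by linarith)
  obtain ⟨d, e, had, hdc, hce, heb, hd, he⟩ := (isBesselChain_besselChain k).exists_interlacing hk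
    ha (fun r hr h => hne r hr (by simpa using (hz 1 (ha.trans hr.1)).2 h))
    ((hz 1 ha).1 (by simpa using hza)) ((hz 1 (ha.trans (hc.1.trans hc.2))).1 (by simpa using hzb))
    hc ((hz 0 (ha.trans hc.1)).1 (by simpa using hzc)) hcr'
  have hJ2 (r : ℝ) (hr : r ∈ Ioo a b) : besselJ (k + 2) r = 0 ↔ r = d := by
    simpa using (hz 2 (ha.trans hr.1)).trans (hd r hr)
  have hJ3 (r : ℝ) (hr : r ∈ Ioo a b) : besselJ (k + 3) r = 0 ↔ r = e := by
    simpa using (hz 3 (ha.trans hr.1)).trans (he r hr)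
  have hdab : d ∈ Ioo a b := ⟨had, hdc.trans hc.2⟩
  have heab : e ∈ Ioo a b := ⟨hc.1.trans hce, heb⟩
  refine ⟨⟨d, ⟨hdab, (hJ2 d hdab).2 rfl⟩, fun r hr => (hJ2 r hr.1).1 hr.2⟩,
    ⟨e, ⟨heab, (hJ3 e heab).2 rfl⟩, fun r hr => (hJ3 r hr.1).1 hr.2⟩, fun d₁ e₁ hd₁ h2 he₁ h3 => ?_⟩
  rw [(hJ2 d₁ hd₁).1 h2, (hJ3 e₁ he₁).1 h3]
  exact ⟨had, hdc, hce, heb⟩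

/-- Interlacing of the zeros of `J_{k+2}`, `J_{k+3}` with those of `J_k` between consecutive
zeros of `J_{k+1}`, in the case `c > 2√((k+1)(k+2))`. -/
theorem besselJ_interlacing_large (k : ℝ) (hk : -1 < k) (a b : ℝ)
    (ha : 0 < a) (hab : a < b)
    (hza : besselJ (k + 1) a = 0) (hzb : besselJ (k + 1) b = 0)
    (hne : ∀ r ∈ Set.Ioo a b, besselJ (k + 1) r ≠ 0)
    (c : ℝ) (hc : c ∈ Set.Ioo a b) (hzc : besselJ k c = 0)
    (hcr : 2 * Real.sqrt ((k + 1) * (k + 2)) < c) :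
    (∃! d, d ∈ Set.Ioo a b ∧ besselJ (k + 2) d = 0) ∧
    (∃! e, e ∈ Set.Ioo a b ∧ besselJ (k + 3) e = 0) ∧
    ∀ d e, d ∈ Set.Ioo a b → besselJ (k + 2) d = 0 →
      e ∈ Set.Ioo a b → besselJ (k + 3) e = 0 →
        a < d ∧ d < c ∧ c < e ∧ e < b :=
  besselJ_interlacing_large_general k hk a b ha hza hzb hne c hc hzc hcr
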